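/- Under hypotheses (S) and (B), for every integer α ≥ 0 there exists C > 0 such that for all x' ∈ U', ξ' ∈ ℝ^{n−1} and all (t, τ) ∈ ℝ²: ω(t/⟨ξ'⟩) · ⟨ξ'⟩^{α} · |(∂_{ξ_n}^{α} φ)(x', t/⟨ξ'⟩, ξ', τ⟨ξ'⟩)| ≤ C ⟨t⟩ ⟨τ⟩^{1−α}, the constant C being independent of (x', ξ'). (Estimate (2) in the proof of Theorem 1.2.) -/

import Mathlib

noncomputable section

open Real MeasureTheory

/-- Japanese bracket of a real number: `⟨t⟩ = √(1+t²)`. -/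
def jb (t : ℝ) : ℝ := Real.sqrt (1 + t ^ 2)

/-- Japanese bracket of a vector in `ℝᵏ` (Euclidean norm). -/
def jbV {k : ℕ} (v : Fin k → ℝ) : ℝ := Real.sqrt (1 + ∑ i, v i ^ 2)

/-- Japanese bracket of the full covariable `(ξ', ξₙ) ∈ ℝᵏ⁺¹`. -/
def jbP {k : ℕ} (v : Fin k → ℝ) (t : ℝ) : ℝ := Real.sqrt (1 + (∑ i, v i ^ 2) + t ^ 2)

/-- Euclidean norm of a vector in `ℝᵏ`. -/
def enormV {k : ℕ} (v : Fin k → ℝ) : ℝ := Real.sqrt (∑ i, v i ^ 2)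

/-- Euclidean norm of the full covariable `(ξ', ξₙ)`. -/
def enormP {k : ℕ} (v : Fin k → ℝ) (t : ℝ) : ℝ := Real.sqrt ((∑ i, v i ^ 2) + t ^ 2)

/-- Functions of `(x', xₙ, ξ', ξₙ)` with values in `E`. -/
abbrev Fn (k : ℕ) (E : Type*) := (Fin k → ℝ) → ℝ → (Fin k → ℝ) → ℝ → E

/-- The uncurried version of `f : Fn k E`. -/
def Fn.unc {k : ℕ} {E : Type*} (f : Fn k E) :
    ((Fin k → ℝ) × ℝ × (Fin k → ℝ) × ℝ) → E :=
  fun p => f p.1 p.2.1 p.2.2.1 p.2.2.2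

section Derivs

variable {k : ℕ} {E : Type*} [NormedAddCommGroup E] [NormedSpace ℝ E]

/-- Partial derivative in `xₙ`. -/
def Dxn (f : Fn k E) : Fn k E := fun x' xn ξ' ξn => deriv (fun t => f x' t ξ' ξn) xn

/-- Partial derivative in `ξₙ`. -/
def Dxin (f : Fn k E) : Fn k E := fun x' xn ξ' ξn => deriv (fun t => f x' xn ξ' t) ξn

/-- Partial derivative in the `i`-th coordinate of `x'`. -/
def Dxp (i : Fin k) (f : Fn k E) : Fn k E :=
  fun x' xn ξ' ξn => deriv (fun t => f (Function.update x' i t) xn ξ' ξn) (x' i)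

/-- Partial derivative in the `i`-th coordinate of `ξ'`. -/
def Dxip (i : Fin k) (f : Fn k E) : Fn k E :=
  fun x' xn ξ' ξn => deriv (fun t => f x' xn (Function.update ξ' i t) ξn) (ξ' i)

/-- Multi-index partial derivative `∂ₓ'^β`. -/
def DxpM (β : Fin k → ℕ) (f : Fn k E) : Fn k E :=
  (List.finRange k).foldr (fun i g => (Dxp i)^[β i] g) f

/-- Multi-index partial derivative `∂_ξ'^α`. -/
def DxipM (α : Fin k → ℕ) (f : Fn k E) : Fn k E :=
  (List.finRange k).foldr (fun i g => (Dxip i)^[α i] g) f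

/-- Partial derivative in the first of two real variables. -/
def D1 (F : ℝ → ℝ → E) : ℝ → ℝ → E := fun s t => deriv (fun u => F u t) s

/-- Partial derivative in the second of two real variables. -/
def D2 (F : ℝ → ℝ → E) : ℝ → ℝ → E := fun s t => deriv (fun u => F s u) t

end Derivs

/-- The cut-off function `ω`: smooth, even, non-increasing on `[0,∞)`,
`≡ 1` on `[-1/2,1/2]`, `≡ 0` outside `(-1,1)`. -/
def CutOff (ω : ℝ → ℝ) : Prop :=
  ContDiff ℝ (⊤ : ℕ∞) ω ∧ (∀ t, ω (-t) = ω t) ∧ AntitoneOn ω (Set.Ici 0) ∧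
    (∀ t : ℝ, |t| ≤ 1 / 2 → ω t = 1) ∧ (∀ t : ℝ, 1 ≤ |t| → ω t = 0)

/-- `φ := ψ − ψ_∂`, where `ψ_∂(x',ξ') = ψ(x',0,ξ',0)`. -/
def phiOf {k : ℕ} (ψ : Fn k ℝ) : Fn k ℝ :=
  fun x' xn ξ' ξn => ψ x' xn ξ' ξn - ψ x' 0 ξ' 0

/-- Hypothesis (S): symbol estimates of order `1` for `ψ`, for `x' ∈ Ω'`, `|xₙ| ≤ 2`. -/
def HypS {k : ℕ} (Ω' : Set (Fin k → ℝ)) (ψ : Fn k ℝ) : Prop :=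
  ∀ (a b : ℕ) (α β : Fin k → ℕ), ∃ C > 0, ∀ x' ∈ Ω', ∀ xn : ℝ, |xn| ≤ 2 →
    ∀ (ξ' : Fin k → ℝ) (ξn : ℝ),
      |DxpM β ((Dxn)^[b] (DxipM α ((Dxin)^[a] ψ))) x' xn ξ' ξn| ≤
        C * jbP ξ' ξn ^ ((1 : ℝ) - ((a : ℝ) + ∑ i, (α i : ℝ)))

/-- Hypothesis (B): `∂_{ξₙ}ψ(x',0,ξ',ξₙ) = 0` for `x' ∈ Ω'`. -/
def HypB {k : ℕ} (Ω' : Set (Fin k → ℝ)) (ψ : Fn k ℝ) : Prop :=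
  ∀ x' ∈ Ω', ∀ (ξ' : Fin k → ℝ) (ξn : ℝ), Dxin ψ x' 0 ξ' ξn = 0

/-- The rescaled phase function `*Φ`. -/
def PhiS {k : ℕ} (ω : ℝ → ℝ) (K : ℝ) (ψ : Fn k ℝ) (x' ξ' : Fin k → ℝ) (t τ : ℝ) : ℝ :=
  ω (t / jbV ξ') * phiOf ψ x' (t / jbV ξ') ξ' (τ * jbV ξ')
    + (1 - ω (t / jbV ξ')) * K * t * τ


/-!
Let `G := ∂_{ξₙ}^α φ`. Hypothesis (B) makes `G` vanish on `{xₙ = 0}`, and (S) bounds `∂_{xₙ} G`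
by `C ⟨ξ⟩^{1-α}`; by the mean value theorem `|G(x', s, ξ)| ≤ C ⟨ξ⟩^{1-α} |s|` for `|s| ≤ 2`.
On the support of `ω(t/⟨ξ'⟩)` we have `|t/⟨ξ'⟩| ≤ 1`, and at `ξ = (ξ', τ⟨ξ'⟩)` one has
`⟨ξ⟩ = ⟨ξ'⟩⟨τ⟩`, so the powers of `⟨ξ'⟩` cancel exactly and leave `C |t| ⟨τ⟩^{1-α}`.
-/

open Set

lemma abs_le_jb (t : ℝ) : |t| ≤ jb t :=
  Real.abs_le_sqrt (by linarith)

lemma jb_pos (t : ℝ) : 0 < jb t :=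
  Real.sqrt_pos.mpr (by positivity)

lemma jbV_pos {k : ℕ} (v : Fin k → ℝ) : 0 < jbV v :=
  Real.sqrt_pos.mpr (by positivity)

lemma jbP_mul_jbV {k : ℕ} (ξ' : Fin k → ℝ) (τ : ℝ) :
    jbP ξ' (τ * jbV ξ') = jbV ξ' * jb τ := by
  unfold jbP jbV jb
  rw [← Real.sqrt_mul (by positivity), mul_pow, Real.sq_sqrt (by positivity)]
  ring_nf

lemma rpow_mul_rpow_one_sub_mul_div {a b : ℝ} (ha : 0 < a) (hb : 0 ≤ b) (p c : ℝ) :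
    a ^ p * ((a * b) ^ (1 - p) * (c / a)) = b ^ (1 - p) * c := by
  have hsum : a ^ p * a ^ (1 - p) = a := by
    rw [← Real.rpow_add ha]; norm_num
  rw [Real.mul_rpow ha.le hb]
  field_simp
  linear_combination b ^ (1 - p) * c * hsum

section CutOff

variable {ω : ℝ → ℝ}

lemma CutOff.le_one (hω : CutOff ω) (s : ℝ) : ω s ≤ 1 := by
  obtain ⟨-, heven, hanti, hone, -⟩ := hω
  have habs : ω s = ω |s| := by
    rcases abs_cases s with ⟨h, -⟩ | ⟨h, -⟩ <;> simp [h, heven]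
  rw [habs, ← hone 0 (by norm_num)]
  exact hanti (mem_Ici.mpr le_rfl) (mem_Ici.mpr (abs_nonneg s)) (abs_nonneg s)

lemma CutOff.abs_le_one_of_ne_zero (hω : CutOff ω) {s : ℝ} (hs : ω s ≠ 0) : |s| ≤ 1 := by
  obtain ⟨-, -, -, -, hzero⟩ := hω
  by_contra h
  exact hs (hzero s (not_le.mp h).le)

end CutOff

section Calculus

variable {k : ℕ} {E : Type*} [NormedAddCommGroup E] [NormedSpace ℝ E] {f : Fn k E}

lemma Fn.differentiable_along_xn (hf : Differentiable ℝ (Fn.unc f))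
    (x' : Fin k → ℝ) (ξ' : Fin k → ℝ) (ξn : ℝ) :
    Differentiable ℝ (fun u => f x' u ξ' ξn) :=
  hf.comp (by fun_prop : Differentiable ℝ (fun u : ℝ => (x', u, ξ', ξn)))

lemma Fn.differentiable_along_ξn (hf : Differentiable ℝ (Fn.unc f))
    (x' : Fin k → ℝ) (xn : ℝ) (ξ' : Fin k → ℝ) :
    Differentiable ℝ (fun u => f x' xn ξ' u) :=
  hf.comp (by fun_prop : Differentiable ℝ (fun u : ℝ => (x', xn, ξ', u)))

lemma contDiff_unc_Dxin (hf : ContDiff ℝ (⊤ : ℕ∞) (Fn.unc f)) :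
    ContDiff ℝ (⊤ : ℕ∞) (Fn.unc (Dxin f)) := by
  have hfd : Differentiable ℝ (Fn.unc f) := hf.differentiable (by simp)
  have heq : Fn.unc (Dxin f) = fun p => fderiv ℝ (Fn.unc f) p (0, 0, 0, 1) := by
    funext p
    have hcurve : HasDerivAt (fun u : ℝ => (p.1, p.2.1, p.2.2.1, u))
        ((0, 0, 0, 1) : (Fin k → ℝ) × ℝ × (Fin k → ℝ) × ℝ) p.2.2.2 :=
      (hasDerivAt_const _ _).prodMk ((hasDerivAt_const _ _).prodMk
        ((hasDerivAt_const _ _).prodMk (hasDerivAt_id' _)))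
    exact ((hfd p).hasFDerivAt.comp_hasDerivAt p.2.2.2 hcurve).deriv
  rw [heq]
  exact (contDiff_infty_iff_fderiv.mp hf).2.clm_apply contDiff_const

lemma contDiff_unc_iterate_Dxin (hf : ContDiff ℝ (⊤ : ℕ∞) (Fn.unc f)) (m : ℕ) :
    ContDiff ℝ (⊤ : ℕ∞) (Fn.unc ((Dxin)^[m] f)) := by
  induction m with
  | zero => exact hf
  | succ m ih =>
    rw [Function.iterate_succ_apply']
    exact contDiff_unc_Dxin ih

lemma iterate_Dxin_apply_eq_zero {x' : Fin k → ℝ} {xn : ℝ} {ξ' : Fin k → ℝ}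
    (hf : ∀ ξn, f x' xn ξ' ξn = 0) (m : ℕ) (ξn : ℝ) :
    (Dxin)^[m] f x' xn ξ' ξn = 0 := by
  induction m generalizing ξn with
  | zero => exact hf ξn
  | succ m ih =>
    rw [Function.iterate_succ_apply']
    show deriv (fun u => (Dxin)^[m] f x' xn ξ' u) ξn = 0
    simp [funext ih]

lemma norm_le_mul_abs_of_norm_deriv_le {h : ℝ → E} {M r s : ℝ} (hd : Differentiable ℝ h)
    (h0 : h 0 = 0) (hM : ∀ u ∈ Icc (-r) r, ‖deriv h u‖ ≤ M) (hs : |s| ≤ r) :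
    ‖h s‖ ≤ M * |s| := by
  have hr : 0 ≤ r := (abs_nonneg s).trans hs
  have := (convex_Icc (-r) r).norm_image_sub_le_of_norm_deriv_le (fun u _ => hd u) hM
    (by simp [hr] : (0 : ℝ) ∈ Icc (-r) r) (abs_le.mp hs)
  simpa [h0] using this

end Calculus

section Phase

variable {k : ℕ} {ψ : Fn k ℝ}

lemma contDiff_unc_phiOf (hψ : ContDiff ℝ (⊤ : ℕ∞) (Fn.unc ψ)) :
    ContDiff ℝ (⊤ : ℕ∞) (Fn.unc (phiOf ψ)) :=
  hψ.sub (hψ.comp (by fun_prop : ContDiff ℝ (⊤ : ℕ∞)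
    (fun p : (Fin k → ℝ) × ℝ × (Fin k → ℝ) × ℝ => (p.1, (0 : ℝ), p.2.2.1, (0 : ℝ)))))

lemma Dxn_iterate_Dxin_phiOf (ψ : Fn k ℝ) (m : ℕ) :
    Dxn ((Dxin)^[m] (phiOf ψ)) = Dxn ((Dxin)^[m] ψ) := by
  funext x' xn ξ' ξn
  cases m with
  | zero => exact deriv_sub_const _
  | succ m =>
    have hDxin : Dxin (phiOf ψ) = Dxin ψ := by
      funext x' xn ξ' ξn
      exact deriv_sub_const _
    rw [Function.iterate_succ_apply, Function.iterate_succ_apply, hDxin]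

lemma HypB.phiOf_apply_zero {Ω' : Set (Fin k → ℝ)} (hB : HypB Ω' ψ)
    (hψ : Differentiable ℝ (Fn.unc ψ)) {x' : Fin k → ℝ} (hx' : x' ∈ Ω') (ξ' : Fin k → ℝ)
    (ξn : ℝ) : phiOf ψ x' 0 ξ' ξn = 0 :=
  sub_eq_zero.mpr (is_const_of_deriv_eq_zero (Fn.differentiable_along_ξn hψ x' 0 ξ')
    (hB x' hx' ξ') ξn 0)

lemma HypS.exists_abs_Dxn_iterate_Dxin_le {Ω' : Set (Fin k → ℝ)} (hS : HypS Ω' ψ) (a : ℕ) :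
    ∃ C > 0, ∀ x' ∈ Ω', ∀ xn : ℝ, |xn| ≤ 2 → ∀ (ξ' : Fin k → ℝ) (ξn : ℝ),
      |Dxn ((Dxin)^[a] ψ) x' xn ξ' ξn| ≤ C * jbP ξ' ξn ^ ((1 : ℝ) - a) := by
  obtain ⟨C, hC, hbound⟩ := hS a 1 0 0
  refine ⟨C, hC, fun x' hx' xn hxn ξ' ξn => ?_⟩
  simpa [DxpM, DxipM] using hbound x' hx' xn hxn ξ' ξn

lemma exists_abs_iterate_Dxin_phiOf_le {Ω' : Set (Fin k → ℝ)}
    (hψ : ContDiff ℝ (⊤ : ℕ∞) (Fn.unc ψ)) (hS : HypS Ω' ψ) (hB : HypB Ω' ψ) (α : ℕ) :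
    ∃ C > 0, ∀ x' ∈ Ω', ∀ s : ℝ, |s| ≤ 2 → ∀ (ξ' : Fin k → ℝ) (ξn : ℝ),
      |(Dxin)^[α] (phiOf ψ) x' s ξ' ξn| ≤ C * jbP ξ' ξn ^ ((1 : ℝ) - α) * |s| := by
  obtain ⟨C, hC, hbound⟩ := hS.exists_abs_Dxn_iterate_Dxin_le α
  refine ⟨C, hC, fun x' hx' s hs ξ' ξn => ?_⟩
  have hG : Differentiable ℝ (Fn.unc ((Dxin)^[α] (phiOf ψ))) :=
    (contDiff_unc_iterate_Dxin (contDiff_unc_phiOf hψ) α).differentiable (by simp)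
  have hG0 : (Dxin)^[α] (phiOf ψ) x' 0 ξ' ξn = 0 :=
    iterate_Dxin_apply_eq_zero
      (hB.phiOf_apply_zero (hψ.differentiable (by simp)) hx' ξ') α ξn
  refine norm_le_mul_abs_of_norm_deriv_le (Fn.differentiable_along_xn hG x' ξ' ξn) hG0
    (fun u hu => ?_) hs
  have h := hbound x' hx' u (abs_le.mpr hu) ξ' ξn
  rwa [← Dxn_iterate_Dxin_phiOf] at h

end Phase

theorem statement5_general {n : ℕ}
    (Ω' : Set (Fin (n - 1) → ℝ))
    (U' : Set (Fin (n - 1) → ℝ)) (hUΩ : U' ⊆ Ω')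
    (ψ : Fn (n - 1) ℝ) (hψ : ContDiff ℝ (⊤ : ℕ∞) (Fn.unc ψ))
    (hS : HypS Ω' ψ) (hB : HypB Ω' ψ)
    (ω : ℝ → ℝ) (hω : CutOff ω) (α : ℕ) :
    ∃ C > 0, ∀ x' ∈ U', ∀ (ξ' : Fin (n - 1) → ℝ) (t τ : ℝ),
      ω (t / jbV ξ') * jbV ξ' ^ (α : ℝ) *
        |(Dxin)^[α] (phiOf ψ) x' (t / jbV ξ') ξ' (τ * jbV ξ')| ≤
      C * jb t * jb τ ^ ((1 : ℝ) - (α : ℝ)) := by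
  obtain ⟨C, hC, hbound⟩ := exists_abs_iterate_Dxin_phiOf_le hψ hS hB α
  refine ⟨C, hC, fun x' hx' ξ' t τ => ?_⟩
  have hξ' := jbV_pos ξ'
  have hτ := jb_pos τ
  have hrhs : 0 ≤ C * jb t * jb τ ^ ((1 : ℝ) - α) := by
    have := jb_pos t
    positivity
  rcases le_or_gt (ω (t / jbV ξ')) 0 with hω0 | hω0
  · exact (mul_nonpos_of_nonpos_of_nonneg (mul_nonpos_of_nonpos_of_nonneg hω0 (by positivity))
      (abs_nonneg _)).trans hrhs
  have hG := hbound x' (hUΩ hx') (t / jbV ξ') (by linarith [hω.abs_le_one_of_ne_zero hω0.ne'])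
    ξ' (τ * jbV ξ')
  rw [jbP_mul_jbV, abs_div, abs_of_pos hξ'] at hG
  calc ω (t / jbV ξ') * jbV ξ' ^ (α : ℝ) *
        |(Dxin)^[α] (phiOf ψ) x' (t / jbV ξ') ξ' (τ * jbV ξ')|
      ≤ 1 * jbV ξ' ^ (α : ℝ) * (C * (jbV ξ' * jb τ) ^ ((1 : ℝ) - α) * (|t| / jbV ξ')) := by
        gcongr
        exact hω.le_one _
    _ = C * (jb τ ^ ((1 : ℝ) - α) * |t|) := by
        rw [← rpow_mul_rpow_one_sub_mul_div hξ' hτ.le]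
        ring
    _ ≤ C * jb t * jb τ ^ ((1 : ℝ) - α) := by
        rw [mul_comm (jb τ ^ _), ← mul_assoc]
        gcongr
        exact abs_le_jb t

/-- Estimate (2) in the proof of Theorem 1.2: under (S) and (B), for every `α ∈ ℕ`,
`ω(t/⟨ξ'⟩) ⟨ξ'⟩^α |(∂_{ξₙ}^α φ)(x', t/⟨ξ'⟩, ξ', τ⟨ξ'⟩)| ≤ C ⟨t⟩ ⟨τ⟩^{1-α}` with `C`
independent of `(x', ξ') ∈ U' × ℝ^{n-1}`. -/
theorem statement5 {n : ℕ} (hn : 2 ≤ n)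
    (Ω' : Set (Fin (n - 1) → ℝ)) (hΩ' : IsOpen Ω')
    (U' : Set (Fin (n - 1) → ℝ)) (hU' : IsCompact U') (hUΩ : U' ⊆ Ω')
    (ψ : Fn (n - 1) ℝ) (hψ : ContDiff ℝ (⊤ : ℕ∞) (Fn.unc ψ))
    (hS : HypS Ω' ψ) (hB : HypB Ω' ψ)
    (ω : ℝ → ℝ) (hω : CutOff ω) (α : ℕ) :
    ∃ C > 0, ∀ x' ∈ U', ∀ (ξ' : Fin (n - 1) → ℝ) (t τ : ℝ),
      ω (t / jbV ξ') * jbV ξ' ^ (α : ℝ) *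
        |(Dxin)^[α] (phiOf ψ) x' (t / jbV ξ') ξ' (τ * jbV ξ')| ≤
      C * jb t * jb τ ^ ((1 : ℝ) - (α : ℝ)) :=
  statement5_general Ω' U' hUΩ ψ hψ hS hB ω hω α
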